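/- arXiv:2507.02582 — 4 statements merged into one kernel-verified Lean document; each statement's English description precedes it below -/
import Mathlib

section
/- Let φ : {0,1}^m × {0,1}^ℓ → Bool. Define the two-agent sequential decision-making mechanism M with action sets A_1 = {0,1}^m × {0,1} (agent 1 chooses a pair (a, z₁)) and A_2 = {0,1}^ℓ × {0,1} (agent 2 chooses a pair (b, z₂)), and deontic constraint γ((a, z₁), (b, z₂)) = ((¬ φ(a, b)) ∧ z₁) ∨ z₂. Then (for every a ∈ {0,1}^m there exists b ∈ {0,1}^ℓ with φ(a, b) = true) if and only if M is diffusion-free. -/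
/-- A sequential decision-making mechanism: `n` agents, finite nonempty
action sets `A 0, …, A (n-1)` (agents act in the order of their indices),
and a deontic constraint `γ` on action profiles. -/
structure Mech where
  n : ℕ
  A : Fin n → Type
  fin : ∀ i, Finite (A i)
  ne : ∀ i, Nonempty (A i)
  γ : (∀ i, A i) → Bool

namespace Mech

/-- An action profile. -/
abbrev Profile (M : Mech) : Type := ∀ i, M.A i

/-- Agent `i` is responsible under profile `s`: the deontic constraint is
violated, and agent `i` had an action `t` that, given the actions of the
agents before it, would have guaranteed the constraint no matter what the
later agents do. -/
def Responsible (M : Mech) (s : M.Profile) (i : Fin M.n) : Prop :=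
  M.γ s = false ∧ ∃ t : M.A i, ∀ s' : M.Profile,
    (∀ j, j < i → s' j = s j) → s' i = t → M.γ s' = true

/-- `cf_i(s_1, …, s_{i-1})`: agent `i` has an action guaranteeing the
constraint, given the prefix of `s` before `i`. -/
def Cf (M : Mech) (s : M.Profile) (i : Fin M.n) : Prop :=
  ∃ t : M.A i, ∀ s' : M.Profile,
    (∀ j, j < i → s' j = s j) → s' i = t → M.γ s' = true

/-- Diffusion-free: at most one responsible agent whenever `γ` is violated. -/
def DF (M : Mech) : Prop :=
  ∀ s : M.Profile, M.γ s = false →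
    ∀ i j, M.Responsible s i → M.Responsible s j → i = j

/-- Gap-free: at least one responsible agent whenever `γ` is violated. -/
def GF (M : Mech) : Prop :=
  ∀ s : M.Profile, M.γ s = false → ∃ i, M.Responsible s i

/-- Gap-and-diffusion-free: exactly one responsible agent whenever `γ` is violated. -/
def GDF (M : Mech) : Prop :=
  ∀ s : M.Profile, M.γ s = false → ∃! i, M.Responsible s i

/-- Responsibility-free: no agent is responsible under any profile. -/
def RF (M : Mech) : Prop :=
  ∀ (s : M.Profile) (i : Fin M.n), ¬ M.Responsible s i

/-- Agent `j` of the partial mechanism `M_k` as an agent of `M`. -/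
def shift (M : Mech) (k : ℕ) (h : k ≤ M.n) (j : Fin (M.n - k)) : Fin M.n :=
  ⟨k + j.val, by omega⟩

/-- Combine a prefix of `s` (first `k` actions) with actions `u` of
agents `k+1, …, n` into a full profile. -/
def glue (M : Mech) (k : ℕ) (h : k ≤ M.n) (s : M.Profile)
    (u : ∀ j : Fin (M.n - k), M.A (M.shift k h j)) : M.Profile := fun i =>
  if hi : i.val < k then s i
  else
    have hj : i.val - k < M.n - k := by omega
    have he : M.shift k h ⟨i.val - k, hj⟩ = i := Fin.ext (by
      show k + (i.val - k) = i.val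
      omega)
    he ▸ u ⟨i.val - k, hj⟩

/-- The partial mechanism `M_k(s_1, …, s_k)`: the first `k` agents have
already acted according to `s`. -/
def part (M : Mech) (k : ℕ) (h : k ≤ M.n) (s : M.Profile) : Mech where
  n := M.n - k
  A := fun j => M.A (M.shift k h j)
  fin := fun _ => M.fin _
  ne := fun _ => M.ne _
  γ := fun u => M.γ (M.glue k h s u)

/-- The restriction of a profile of `M` to a profile of `M_k(s_1, …, s_k)`. -/
def restrict (M : Mech) (k : ℕ) (h : k ≤ M.n) (s : M.Profile) :
    (M.part k h s).Profile :=
  fun j => s (M.shift k h j)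

end Mech

/-- The two-agent mechanism of STATEMENT 1: agent 1 chooses `(a, z₁)`,
agent 2 chooses `(b, z₂)`, and `γ((a,z₁),(b,z₂)) = ((¬φ(a,b)) ∧ z₁) ∨ z₂`. -/
def diffusionMech (m ℓ : ℕ) (φ : (Fin m → Bool) → (Fin ℓ → Bool) → Bool) : Mech where
  n := 2
  A := ![(Fin m → Bool) × Bool, (Fin ℓ → Bool) × Bool]
  fin := by intro i; fin_cases i <;> dsimp <;> infer_instance
  ne := by intro i; fin_cases i <;> dsimp <;> infer_instance
  γ := fun s => ((!(φ (s 0).1 (s 1).1)) && (s 0).2) || (s 1).2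

/-!
Agent 2 can always enforce `γ` by playing `z₂ = true`, so it is responsible exactly when `γ` is
violated. Agent 1 can enforce `γ` only through `(¬φ(a, b)) ∧ z₁`, against every `b`, so it is
responsible under a violating profile exactly when some `a` makes `φ(a, ·)` identically false.
Hence two agents share responsibility precisely when `∀ a, ∃ b, φ(a, b)` fails.
-/

namespace Mech

theorem DF_of_forall_responsible_eq (M : Mech) (k : Fin M.n)
    (h : ∀ s i, M.Responsible s i → i = k) : M.DF :=
  fun s _ i j hi hj => (h s i hi).trans (h s j hj).symm

theorem not_DF_of_responsible_of_ne {M : Mech} {s : M.Profile} {i j : Fin M.n} (hij : i ≠ j)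
    (hi : M.Responsible s i) (hj : M.Responsible s j) : ¬M.DF :=
  fun hdf => hij (hdf s hi.1 i j hi hj)

end Mech

namespace diffusionMech
variable {m ℓ : ℕ} {φ : (Fin m → Bool) → (Fin ℓ → Bool) → Bool}

def profile (x : (Fin m → Bool) × Bool) (y : (Fin ℓ → Bool) × Bool) :
    (diffusionMech m ℓ φ).Profile :=
  Fin.cons x (Fin.cons y finZeroElim)

theorem γ_eq (s : (diffusionMech m ℓ φ).Profile) :
    (diffusionMech m ℓ φ).γ s =
      ((!φ (s (0 : Fin 2)).1 (s (1 : Fin 2)).1) && (s (0 : Fin 2)).2 || (s (1 : Fin 2)).2) :=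
  rfl

@[simp]
theorem γ_profile (x : (Fin m → Bool) × Bool) (y : (Fin ℓ → Bool) × Bool) :
    (diffusionMech m ℓ φ).γ (profile x y) = ((!φ x.1 y.1) && x.2 || y.2) := rfl

theorem responsible_zero_iff {s : (diffusionMech m ℓ φ).Profile} :
    (diffusionMech m ℓ φ).Responsible s (0 : Fin 2) ↔
      (diffusionMech m ℓ φ).γ s = false ∧ ∃ a, ∀ b, φ a b = false := by
  refine and_congr_right fun _ =>
    ⟨fun ⟨⟨a, z⟩, ht⟩ => ⟨a, fun b => ?_⟩, fun ⟨a, ha⟩ => ?_⟩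
  · have := ht (profile (a, z) (b, false)) (fun j hj => absurd hj (Nat.not_lt_zero j.val)) rfl
    simp_all
  · refine ⟨((a, true) : (Fin m → Bool) × Bool), fun s' _ hs' => ?_⟩
    rw [γ_eq, hs']
    simp [ha]

theorem responsible_one_iff {s : (diffusionMech m ℓ φ).Profile} :
    (diffusionMech m ℓ φ).Responsible s (1 : Fin 2) ↔ (diffusionMech m ℓ φ).γ s = false := by
  refine ⟨And.left, fun hs =>
    ⟨hs, ((fun _ => false, true) : (Fin ℓ → Bool) × Bool), fun s' _ hs' => ?_⟩⟩
  rw [γ_eq, hs']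
  simp

theorem eq_one_of_responsible (hφ : ∀ a, ∃ b, φ a b = true)
    {s : (diffusionMech m ℓ φ).Profile}
    {i : Fin (diffusionMech m ℓ φ).n} (hi : (diffusionMech m ℓ φ).Responsible s i) :
    i = (1 : Fin 2) := by
  obtain ⟨_ | _ | k, hk⟩ := i
  · obtain ⟨a, ha⟩ := (responsible_zero_iff.mp hi).2
    obtain ⟨b, hb⟩ := hφ a
    simp [ha b] at hb
  · rfl
  · exact absurd hk (by change ¬ k + 2 < 2; omega)

end diffusionMech

/-- `∀a ∃b, φ(a,b)` holds iff the mechanism is diffusion-free. -/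
theorem forall_exists_iff_diffusionFree (m ℓ : ℕ)
    (φ : (Fin m → Bool) → (Fin ℓ → Bool) → Bool) :
    (∀ a : Fin m → Bool, ∃ b : Fin ℓ → Bool, φ a b = true) ↔
      (diffusionMech m ℓ φ).DF := by
  refine ⟨fun hφ => Mech.DF_of_forall_responsible_eq _ (1 : Fin 2) fun _ _ =>
    diffusionMech.eq_one_of_responsible hφ, fun hdf a => ?_⟩
  by_contra! ha
  simp only [ne_eq, Bool.not_eq_true] at ha
  set s := diffusionMech.profile (φ := φ) (a, false) (fun _ => false, false)
  have hs : (diffusionMech m ℓ φ).γ s = false := by simp [s]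
  exact Mech.not_DF_of_responsible_of_ne (i := (0 : Fin 2)) (j := (1 : Fin 2)) Fin.zero_ne_one
    (diffusionMech.responsible_zero_iff.mpr ⟨hs, a, ha⟩)
    (diffusionMech.responsible_one_iff.mpr hs) hdf
end

section
/- Let φ : {0,1}^p × {0,1}^q × {0,1}^r → Bool. Define the three-agent sequential decision-making mechanism M with action sets A_1 = {0,1}^p, A_2 = {0,1}^q × {0,1} (agent 2 chooses a pair (b, t)), A_3 = {0,1}^r, and deontic constraint γ(a, (b, t), c) = φ(a, b, c) ∧ t. Then (for every a ∈ {0,1}^p there exists b ∈ {0,1}^q such that for every c ∈ {0,1}^r, φ(a, b, c) = true) if and only if M is gap-free. -/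
/-- The three-agent mechanism of STATEMENT 3: agent 1 chooses `a`,
agent 2 chooses `(b, t)`, agent 3 chooses `c`, and
`γ(a, (b,t), c) = φ(a,b,c) ∧ t`. -/
def gapMech (p q r : ℕ)
    (φ : (Fin p → Bool) → (Fin q → Bool) → (Fin r → Bool) → Bool) : Mech where
  n := 3
  A := ![Fin p → Bool, (Fin q → Bool) × Bool, Fin r → Bool]
  fin := by
    intro i; fin_cases i
    · exact inferInstanceAs (Finite (Fin p → Bool))
    · exact inferInstanceAs (Finite ((Fin q → Bool) × Bool))
    · exact inferInstanceAs (Finite (Fin r → Bool))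
  ne := by
    intro i; fin_cases i
    · exact inferInstanceAs (Nonempty (Fin p → Bool))
    · exact inferInstanceAs (Nonempty ((Fin q → Bool) × Bool))
    · exact inferInstanceAs (Nonempty (Fin r → Bool))
  γ := fun s => φ (s 0) (s 1).1 (s 2) && (s 1).2

/-- Build a full profile of `gapMech` from the three actions. -/
def prof3 {p q r : ℕ}
    {φ : (Fin p → Bool) → (Fin q → Bool) → (Fin r → Bool) → Bool}
    (a : Fin p → Bool) (bt : (Fin q → Bool) × Bool) (c : Fin r → Bool) :
    (gapMech p q r φ).Profile :=
  Fin.cons a (Fin.cons bt (Fin.cons c finZeroElim))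

lemma gamma_prof3 {p q r : ℕ}
    {φ : (Fin p → Bool) → (Fin q → Bool) → (Fin r → Bool) → Bool}
    (a : Fin p → Bool) (bt : (Fin q → Bool) × Bool) (c : Fin r → Bool) :
    (gapMech p q r φ).γ (prof3 a bt c) = (φ a bt.1 c && bt.2) := rfl

/-- `∀a ∃b ∀c, φ(a,b,c)` holds iff the mechanism is gap-free. -/
theorem forall_exists_forall_iff_gapFree (p q r : ℕ)
    (φ : (Fin p → Bool) → (Fin q → Bool) → (Fin r → Bool) → Bool) :
    (∀ a : Fin p → Bool, ∃ b : Fin q → Bool, ∀ c : Fin r → Bool,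
        φ a b c = true) ↔
      (gapMech p q r φ).GF := by
  have e0 : (0:ℕ) < (gapMech p q r φ).n := by show (0:ℕ) < 3; omega
  have e1 : (1:ℕ) < (gapMech p q r φ).n := by show (1:ℕ) < 3; omega
  have e2 : (2:ℕ) < (gapMech p q r φ).n := by show (2:ℕ) < 3; omega
  constructor
  · -- forward: agent 1 (the second agent) is always responsible
    intro h s hs
    obtain ⟨b, hb⟩ := h (s ⟨0, e0⟩)
    refine ⟨⟨1, e1⟩, hs, ⟨(b, true), ?_⟩⟩
    intro s' hpre h1
    have h0 : s' ⟨0, e0⟩ = s ⟨0, e0⟩ := hpre ⟨0, e0⟩ (by simp [Fin.lt_def])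
    show (φ (s' ⟨0, e0⟩) (s' ⟨1, e1⟩).1 (s' ⟨2, e2⟩) && (s' ⟨1, e1⟩).2) = true
    rw [h0, h1]
    simp only [Bool.and_true]
    exact hb _
  · intro h a
    by_contra hb
    push_neg at hb
    simp only [Bool.not_eq_true] at hb
    set b₀ : Fin q → Bool := fun _ => false with hb₀
    set c₀ : Fin r → Bool := fun _ => false with hc₀
    set s : (gapMech p q r φ).Profile := prof3 a (b₀, false) c₀ with hsdef
    have hγ : (gapMech p q r φ).γ s = false := by
      rw [hsdef, gamma_prof3]; simp
    obtain ⟨i, hif, t, ht⟩ := h s hγ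
    have hi3 : i.val < 3 := i.isLt
    obtain ⟨iv, hiv⟩ := i
    interval_cases iv
    · -- agent 0 can't guarantee: agent 1 can play t = false
      have := ht (prof3 t (b₀, false) c₀)
        (fun j hj => absurd hj (by simp [Fin.lt_def])) rfl
      erw [gamma_prof3] at this
      simp at this
    · -- agent 1
      obtain ⟨b, tt⟩ := t
      cases tt with
      | false =>
        have := ht (prof3 a (b, false) c₀)
          (by
            intro j hj
            have hj1 : j.val < 1 := hj
            have : j = ⟨0, e0⟩ := Fin.ext (show j.val = 0 by omega)
            subst this
            rfl) rfl
        rw [gamma_prof3] at this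
        simp at this
      | true =>
        obtain ⟨c, hc⟩ := hb b
        have := ht (prof3 a (b, true) c)
          (by
            intro j hj
            have hj1 : j.val < 1 := hj
            have : j = ⟨0, e0⟩ := Fin.ext (show j.val = 0 by omega)
            subst this
            rfl) rfl
        rw [gamma_prof3] at this
        simp [hc] at this
    · -- agent 2 can't guarantee: agent 1 already played t = false
      have := ht (prof3 a (b₀, false) t)
        (by
          intro j hj
          have hj2 : j.val < 2 := hj
          obtain ⟨jv, hjv⟩ := j
          interval_cases jv
          · rfl
          · rfl) rfl
      erw [gamma_prof3] at this
      simp at this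
end

section
/- For any sequential decision-making mechanism M, any k with 0 ≤ k ≤ n, and any s_1 ∈ A_1, …, s_k ∈ A_k, the partial mechanism M_k(s_1, …, s_k) is responsibility-free if and only if γ(s_1, …, s_k, u_{k+1}, …, u_n) = γ(s_1, …, s_k, u'_{k+1}, …, u'_n) for all tuples (u_{k+1}, …, u_n) and (u'_{k+1}, …, u'_n) of actions of the remaining agents (i.e., with the prefix s_1, …, s_k fixed, the value of γ does not depend on the actions of agents k+1 through n). -/
namespace Mech

theorem not_responsible_iff (N : Mech) (s : N.Profile) (i : Fin N.n) :
    ¬ N.Responsible s i ↔ N.γ s = false →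
      ∀ t : N.A i, ∃ s' : N.Profile,
        (∀ j, j < i → s' j = s j) ∧ s' i = t ∧ N.γ s' = false := by
  simp [Responsible]

/- Descending induction on `i`: as agent `i` is not responsible, `s i` can be replaced by `t i`
while keeping a violation. -/
theorem RF.γ_eq_false_of_agree {N : Mech} (hrf : N.RF) {i : ℕ} (hi : i ≤ N.n) :
    ∀ s t : N.Profile, N.γ s = false →
      (∀ j : Fin N.n, (j : ℕ) < i → t j = s j) → N.γ t = false := by
  induction hi using Nat.decreasingInduction with
  | self =>
    intro s t hs hagree
    rwa [funext fun j => hagree j j.isLt]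
  | of_succ i hi ih =>
    intro s t hs hagree
    obtain ⟨s', hprefix, hlast, hs'⟩ :=
      (N.not_responsible_iff s ⟨i, hi⟩).mp (hrf s _) hs (t ⟨i, hi⟩)
    refine ih s' t hs' fun j hj => ?_
    rcases Nat.lt_or_ge j i with hji | hji
    · rw [hagree j hji, hprefix j hji]
    · rw [show j = ⟨i, hi⟩ from Fin.ext (by simp only; omega), hlast]

theorem RF_iff_const (N : Mech) :
    N.RF ↔ ∀ u u' : N.Profile, N.γ u = N.γ u' := by
  constructor
  · intro hrf u u'
    have hfalse (a b : N.Profile) (ha : N.γ a = false) : N.γ b = false :=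
      hrf.γ_eq_false_of_agree (Nat.zero_le _) a b ha fun j hj => absurd hj (Nat.not_lt_zero _)
    cases hu : N.γ u <;> cases hu' : N.γ u'
    · rfl
    · simpa [hu'] using hfalse u u' hu
    · simpa [hu] using hfalse u' u hu'
    · rfl
  · rintro hconst s i ⟨hviol, t, ht⟩
    have hupdate : N.γ (Function.update s i t) = true :=
      ht _ (fun j hj => Function.update_of_ne hj.ne _ _) (Function.update_self _ _ _)
    simp [hconst (Function.update s i t) s, hviol] at hupdate

end Mech

/-- the partial mechanism `M_k(s_1, …, s_k)` is
responsibility-free iff, with the prefix `s_1, …, s_k` fixed, the value of the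
deontic constraint does not depend on the actions of agents `k+1` through `n`. -/
theorem part_RF_iff_const (M : Mech) (k : ℕ) (h : k ≤ M.n) (s : M.Profile) :
    (M.part k h s).RF ↔
      ∀ u u' : (M.part k h s).Profile,
        (M.part k h s).γ u = (M.part k h s).γ u' :=
  Mech.RF_iff_const (M.part k h s)
end

section
/- Let M be a sequential decision-making mechanism, k < n, and s_1 ∈ A_1, …, s_k ∈ A_k be such that there exists t ∈ A_{k+1} with γ(s_1, …, s_k, t, u_{k+2}, …, u_n) = true for all u_{k+2} ∈ A_{k+2}, …, u_n ∈ A_n. Then the following two conditions are equivalent: (1) M_k(s_1, …, s_k) ∈ GDF; (2) M_{k+1}(s_1, …, s_k, s_{k+1}) is responsibility-free for every s_{k+1} ∈ A_{k+1}. -/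
namespace Mech

lemma shift_val (M : Mech) (k : ℕ) (h : k ≤ M.n) (j : Fin (M.n - k)) :
    (M.shift k h j).val = k + j.val := rfl

lemma glue_lt (M : Mech) (k : ℕ) (h : k ≤ M.n) (s : M.Profile)
    (u : ∀ j : Fin (M.n - k), M.A (M.shift k h j)) (i : Fin M.n) (hi : i.val < k) :
    M.glue k h s u i = s i := by
  simp [Mech.glue, hi]

lemma glue_shift (M : Mech) (k : ℕ) (h : k ≤ M.n) (s : M.Profile)
    (u : ∀ j : Fin (M.n - k), M.A (M.shift k h j)) (j : Fin (M.n - k)) :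
    M.glue k h s u (M.shift k h j) = u j := by
  obtain ⟨jv, hjv⟩ := j
  show M.glue k h s u ⟨k + jv, by omega⟩ = u ⟨jv, hjv⟩
  simp only [Mech.glue]
  rw [dif_neg (by omega : ¬ (k + jv < k))]
  apply eq_of_heq
  refine HEq.trans (eqRec_heq _ _) ?_
  exact congr_arg_heq u (Fin.ext (by show k + jv - k = jv; omega))

lemma glue_eq_of (M : Mech) (k : ℕ) (h : k ≤ M.n) (s : M.Profile)
    (u u' : ∀ j : Fin (M.n - k), M.A (M.shift k h j)) (j : Fin (M.n - k))
    (hpre : ∀ j' : Fin (M.n - k), j' < j → u' j' = u j')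
    (i : Fin M.n) (hik : i.val < k + j.val) :
    M.glue k h s u' i = M.glue k h s u i := by
  by_cases hi : i.val < k
  · rw [glue_lt _ _ _ _ _ _ hi, glue_lt _ _ _ _ _ _ hi]
  · have hi2 := i.isLt
    have hj2 := j.isLt
    obtain ⟨jv, hj1, hj3⟩ : ∃ jv : Fin (M.n - k), jv.val < j.val ∧ i = M.shift k h jv :=
      ⟨⟨i.val - k, by omega⟩, by simp; omega, Fin.ext (by simp [shift_val]; omega)⟩
    subst hj3
    rw [glue_shift, glue_shift]
    exact hpre _ hj1

lemma glue_restrict (M : Mech) (k : ℕ) (h : k ≤ M.n) (s s' : M.Profile)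
    (hs : ∀ i : Fin M.n, i.val < k → s' i = s i) :
    M.glue k h s (M.restrict k h s') = s' := by
  funext i
  by_cases hi : i.val < k
  · erw [glue_lt _ _ _ _ _ _ hi, ← hs i hi]
  · have hi2 := i.isLt
    obtain ⟨jv, hj3⟩ : ∃ jv : Fin (M.n - k), i = M.shift k h jv :=
      ⟨⟨i.val - k, by omega⟩, Fin.ext (by simp [shift_val]; omega)⟩
    subst hj3
    erw [glue_shift]
    rfl

lemma responsible_part_iff (M : Mech) (k : ℕ) (h : k ≤ M.n) (s : M.Profile)
    (u : (M.part k h s).Profile) (j : Fin (M.n - k)) :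
    (M.part k h s).Responsible u j ↔ M.Responsible (M.glue k h s u) (M.shift k h j) := by
  constructor
  · rintro ⟨hγ, t, ht⟩
    refine ⟨hγ, t, ?_⟩
    intro s' hpre hst
    have hlow : ∀ i : Fin M.n, i.val < k → s' i = s i := by
      intro i hi
      have hlt : i < M.shift k h j := by
        show i.val < k + j.val
        omega
      erw [hpre i hlt,
        glue_lt _ _ _ _ _ _ hi]
    have hone := ht (M.restrict k h s') ?_ ?_
    · have : M.γ (M.glue k h s (M.restrict k h s')) = true := hone
      rwa [glue_restrict _ _ _ _ _ hlow] at this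
    · intro j' hj'
      show s' (M.shift k h j') = u j'
      have hjj : j'.val < j.val := hj'
      have hlt : M.shift k h j' < M.shift k h j := by
        show k + j'.val < k + j.val
        omega
      erw [hpre (M.shift k h j') hlt, glue_shift]
    · exact hst
  · rintro ⟨hγ, t, ht⟩
    refine ⟨hγ, t, ?_⟩
    intro u' hpre hut
    have hone := ht (M.glue k h s u') ?_ ?_
    · exact hone
    · intro i hij
      exact glue_eq_of M k h s u u' j hpre i hij
    · erw [glue_shift]; exact hut

end Mech

/-- if agent `k+1` has an action `t` guaranteeing the deontic
constraint given the prefix `s_1, …, s_k` (no matter what agents `k+2, …, n`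
do), then `M_k(s_1, …, s_k)` is gap-and-diffusion-free iff
`M_{k+1}(s_1, …, s_k, s_{k+1})` is responsibility-free for every choice of
`s_{k+1}`. -/
theorem part_GDF_iff_RF (M : Mech) (k : ℕ) (hk : k < M.n) (s : M.Profile)
    (h : ∃ t : M.A ⟨k, hk⟩, ∀ s' : M.Profile,
      (∀ j : Fin M.n, j.val < k → s' j = s j) → s' ⟨k, hk⟩ = t →
        M.γ s' = true) :
    (M.part k hk.le s).GDF ↔
      ∀ t : M.A ⟨k, hk⟩,
        (M.part (k + 1) hk (Function.update s ⟨k, hk⟩ t)).RF := by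
  obtain ⟨t₀, ht₀⟩ := h
  constructor
  · intro hGDF t v j hresp
    have hA := (Mech.responsible_part_iff M (k + 1) hk
      (Function.update s ⟨k, hk⟩ t) v j).mp hresp
    set w := M.glue (k + 1) hk (Function.update s ⟨k, hk⟩ t) v with hwdef
    have hγw : M.γ w = false := hA.1
    have hwlow : ∀ i : Fin M.n, i.val < k → w i = s i := by
      intro i hi
      erw [hwdef, Mech.glue_lt _ _ _ _ _ _ (by omega : i.val < k + 1)]
      exact Function.update_of_ne (by simp [Fin.ext_iff]; omega) t s
    have hw : M.glue k hk.le s (M.restrict k hk.le w) = w :=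
      Mech.glue_restrict _ _ _ _ _ hwlow
    have hγu : (M.part k hk.le s).γ (M.restrict k hk.le w) = false := by
      show M.γ (M.glue k hk.le s (M.restrict k hk.le w)) = false
      rw [hw]; exact hγw
    obtain ⟨i0, _, huniq⟩ := hGDF _ hγu
    have hr0 : (M.part k hk.le s).Responsible (M.restrict k hk.le w)
        ⟨0, by show 0 < M.n - k; omega⟩ := by
      erw [Mech.responsible_part_iff, hw]
      refine ⟨hγw, t₀, ?_⟩
      intro s' hpre hs0
      refine ht₀ s' ?_ hs0
      intro i hi
      have hlt : i < M.shift k hk.le ⟨0, by show 0 < M.n - k; omega⟩ := by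
        show i.val < k + 0
        omega
      rw [hpre i hlt]
      exact hwlow i hi
    have hr1 : (M.part k hk.le s).Responsible (M.restrict k hk.le w)
        ⟨j.val + 1, by have hjl : j.val < M.n - (k+1) := j.isLt; show j.val + 1 < M.n - k; omega⟩ := by
      erw [Mech.responsible_part_iff, hw]
      have he : M.shift k hk.le ⟨j.val + 1, by have hjl : j.val < M.n - (k+1) := j.isLt; show j.val + 1 < M.n - k; omega⟩ =
          M.shift (k + 1) hk j := Fin.ext (by show k + (j.val + 1) = k + 1 + j.val; omega)
      erw [he]; exact hA
    have : (⟨0, by show 0 < M.n - k; omega⟩ : Fin (M.n - k)) = ⟨j.val + 1, by have hjl : j.val < M.n - (k+1) := j.isLt; show j.val + 1 < M.n - k; omega⟩ :=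
      (huniq _ hr0).trans (huniq _ hr1).symm
    simp [Fin.ext_iff] at this
  · intro hRF u hγu
    set w := M.glue k hk.le s u with hwdef
    have hγw : M.γ w = false := hγu
    have hwlow : ∀ i : Fin M.n, i.val < k → w i = s i := fun i hi =>
      Mech.glue_lt _ _ _ _ _ _ hi
    have hr0 : (M.part k hk.le s).Responsible u ⟨0, by show 0 < M.n - k; omega⟩ := by
      erw [Mech.responsible_part_iff]
      refine ⟨hγw, t₀, ?_⟩
      intro s' hpre hs0
      refine ht₀ s' ?_ hs0
      intro i hi
      have hlt : i < M.shift k hk.le ⟨0, by show 0 < M.n - k; omega⟩ := by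
        show i.val < k + 0
        omega
      rw [hpre i hlt]
      exact hwlow i hi
    refine ⟨⟨0, by show 0 < M.n - k; omega⟩, hr0, ?_⟩
    intro j hj
    by_contra hne
    have hjpos : 0 < j.val := by
      rcases Nat.eq_zero_or_pos j.val with h0 | h1
      · exact absurd (Fin.ext h0) hne
      · exact h1
    have hA := (Mech.responsible_part_iff M k hk.le s u j).mp hj
    set t := w ⟨k, hk⟩ with htdef
    set s1 := Function.update s ⟨k, hk⟩ t with hs1
    have hwlow1 : ∀ i : Fin M.n, i.val < k + 1 → w i = s1 i := by
      intro i hi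
      by_cases hik : i.val < k
      · rw [hwlow i hik]
        exact (Function.update_of_ne (by simp [Fin.ext_iff]; omega) t s).symm
      · have hik' : i = ⟨k, hk⟩ := Fin.ext (by show i.val = k; omega)
        subst hik'
        simp [hs1, Function.update_self]
        exact htdef.symm
    have hw1 : M.glue (k + 1) hk s1 (M.restrict (k + 1) hk w) = w :=
      Mech.glue_restrict _ _ _ _ _ hwlow1
    have hjlt := j.isLt
    have hjl2 : j.val < M.n - k := hjlt
    refine hRF t (M.restrict (k + 1) hk w) ⟨j.val - 1, by
      show j.val - 1 < M.n - (k+1); omega⟩ ?_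
    erw [Mech.responsible_part_iff, hw1]
    have he : M.shift (k + 1) hk ⟨j.val - 1, by
        show j.val - 1 < M.n - (k+1); omega⟩ = M.shift k hk.le j :=
      Fin.ext (by show k + 1 + (j.val - 1) = k + j.val; omega)
    erw [he]; exact hA
end
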